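/- A graph G has no critical edges if and only if the set of global minimizers of f_G(y) = y^T(I + A_G)y over Δ_n is finite; in that case the global minimizers are exactly the vectors χ^S/α(G) for S a stable set of size α(G). -/

import Mathlib

open Matrix Finset
open scoped Classical

def IsStable {n : ℕ} (G : SimpleGraph (Fin n)) (S : Finset (Fin n)) : Prop :=
  ∀ i ∈ S, ∀ j ∈ S, ¬ G.Adj i j

noncomputable def alpha {n : ℕ} (G : SimpleGraph (Fin n)) : ℕ :=
  sSup {k | ∃ S : Finset (Fin n), IsStable G S ∧ S.card = k}

noncomputable def indic {n : ℕ} (S : Finset (Fin n)) : Fin n → ℝ :=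
  fun i => if i ∈ S then 1 else 0

noncomputable def qform {n : ℕ} (M : Matrix (Fin n) (Fin n) ℝ) (x : Fin n → ℝ) : ℝ :=
  x ⬝ᵥ M.mulVec x

noncomputable def fG {n : ℕ} (G : SimpleGraph (Fin n)) (x : Fin n → ℝ) : ℝ :=
  qform (1 + G.adjMatrix ℝ) x

noncomputable def globMin {n : ℕ} (f : (Fin n → ℝ) → ℝ) : Set (Fin n → ℝ) :=
  {x | x ∈ stdSimplex ℝ (Fin n) ∧ ∀ y ∈ stdSimplex ℝ (Fin n), f x ≤ f y}

/-!
On the simplex, `fG G` is affine along each edge direction `e_i - e_j`, because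
`(e_i - e_j)ᵀ (I + A) (e_i - e_j) = 0`; so the mass of one endpoint of an edge can be moved onto
the other without increasing `fG G`. Repeating this reaches a point whose support `S` is stable,
where `fG G x = ∑ x_k ^ 2 ≥ 1 / |S| ≥ 1 / α(G)`, and the bound is attained at `χ^S / α(G)` for
every maximum stable set `S`.

If no edge is critical, a minimizer `x` and an edge `ij` satisfy
`1 / α(G) = 1 / α(G \ ij) ≤ f_{G \ ij}(x) = 1 / α(G) - 2 x_i x_j`, so the support `S` of `x` is
stable, and then `∑_{k ∈ S} (x_k - 1 / α)² = (|S| - α) / α² ≤ 0` forces `x = χ^S / α(G)`.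
If `ij` is critical, a stable set `T` of `G \ ij` of size `α(G) + 1` contains `i` and `j`, and
`fG G` is affine, hence constant, on the segment between the minimizers `χ^(T - i) / α(G)` and
`χ^(T - j) / α(G)`.
-/

variable {n : ℕ}

section Alpha

variable {G : SimpleGraph (Fin n)}

lemma bddAbove_stableCards (G : SimpleGraph (Fin n)) :
    BddAbove {k | ∃ S : Finset (Fin n), IsStable G S ∧ S.card = k} :=
  ⟨n, by rintro k ⟨S, -, rfl⟩; simpa using S.card_le_univ⟩

lemma IsStable.card_le_alpha {S : Finset (Fin n)} (hS : IsStable G S) : S.card ≤ alpha G :=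
  le_csSup (bddAbove_stableCards G) ⟨S, hS, rfl⟩

lemma exists_isStable_card_eq_alpha (G : SimpleGraph (Fin n)) :
    ∃ S : Finset (Fin n), IsStable G S ∧ S.card = alpha G :=
  Nat.sSup_mem (s := {k | ∃ S : Finset (Fin n), IsStable G S ∧ S.card = k})
    ⟨0, ∅, by simp [IsStable], rfl⟩ (bddAbove_stableCards G)

lemma alpha_pos (hn : 0 < n) (G : SimpleGraph (Fin n)) : 0 < alpha G :=
  IsStable.card_le_alpha (S := {⟨0, hn⟩}) (by simp [IsStable])

lemma IsStable.mono {S T : Finset (Fin n)} (hT : IsStable G T) (hST : S ⊆ T) : IsStable G S :=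
  fun a ha b hb => hT a (hST ha) b (hST hb)

lemma IsStable.of_deleteEdges {S : Finset (Fin n)} {s : Set (Sym2 (Fin n))}
    (hS : IsStable G S) : IsStable (G.deleteEdges s) S :=
  fun a ha b hb hab => hS a ha b hb hab.1

lemma alpha_le_alpha_deleteEdges (G : SimpleGraph (Fin n)) (s : Set (Sym2 (Fin n))) :
    alpha G ≤ alpha (G.deleteEdges s) := by
  obtain ⟨S, hS, hcard⟩ := exists_isStable_card_eq_alpha G
  exact hcard ▸ hS.of_deleteEdges.card_le_alpha

lemma IsStable.erase_of_deleteEdges {i j : Fin n} {T : Finset (Fin n)}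
    (hT : IsStable (G.deleteEdges {s(i, j)}) T) : IsStable G (T.erase i) := by
  intro a ha b hb hab
  refine hT a (mem_of_mem_erase ha) b (mem_of_mem_erase hb)
    (SimpleGraph.deleteEdges_adj.2 ⟨hab, fun h => ?_⟩)
  rcases Sym2.eq_iff.1 h with ⟨rfl, -⟩ | ⟨-, rfl⟩
  · exact ne_of_mem_erase ha rfl
  · exact ne_of_mem_erase hb rfl

end Alpha

section QuadraticForm

lemma qform_add_smul (M : Matrix (Fin n) (Fin n) ℝ) (x d : Fin n → ℝ) (t : ℝ) :
    qform M (x + t • d) = qform M x + t * (x ⬝ᵥ M *ᵥ d + d ⬝ᵥ M *ᵥ x) + t ^ 2 * qform M d := by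
  simp only [qform, mulVec_add, mulVec_smul, dotProduct_add, add_dotProduct, smul_dotProduct,
    dotProduct_smul, smul_eq_mul]
  ring

variable (G : SimpleGraph (Fin n))

lemma fG_eq_sum_sq_add (x : Fin n → ℝ) :
    fG G x = ∑ k, x k ^ 2 + x ⬝ᵥ G.adjMatrix ℝ *ᵥ x := by
  rw [fG, qform, add_mulVec, one_mulVec, dotProduct_add]
  simp only [dotProduct, sq]

lemma fG_single_sub_single {i j : Fin n} (h : G.Adj i j) :
    fG G (Pi.single i 1 - Pi.single j 1) = 0 := by
  simp [fG, qform, mulVec_sub, dotProduct_sub, sub_dotProduct,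
    h, h.symm, h.ne, h.ne']

lemma exists_fG_add_smul_single_sub_single {i j : Fin n} (h : G.Adj i j) (x : Fin n → ℝ) :
    ∃ c, ∀ t : ℝ, fG G (x + t • (Pi.single i 1 - Pi.single j 1)) = fG G x + t * c :=
  ⟨_, fun t => by
    have h0 := fG_single_sub_single G h
    simp only [fG] at h0 ⊢
    rw [qform_add_smul, h0, mul_zero, add_zero]⟩

end QuadraticForm

noncomputable def supp (x : Fin n → ℝ) : Finset (Fin n) := {k | x k ≠ 0}

@[simp] lemma mem_supp {x : Fin n → ℝ} {k : Fin n} : k ∈ supp x ↔ x k ≠ 0 := by simp [supp]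

lemma sum_supp (x : Fin n → ℝ) : ∑ k ∈ supp x, x k = ∑ k, x k :=
  Finset.sum_filter_ne_zero _

lemma sum_sq_supp (x : Fin n → ℝ) : ∑ k ∈ supp x, x k ^ 2 = ∑ k, x k ^ 2 := by
  rw [supp, Finset.sum_filter]
  exact Finset.sum_congr rfl fun k _ => by split_ifs with hk <;> simp_all

lemma one_le_card_supp_mul_sum_sq {x : Fin n → ℝ} (hx : x ∈ stdSimplex ℝ (Fin n)) :
    1 ≤ ((supp x).card : ℝ) * ∑ k, x k ^ 2 := by
  have h := sq_sum_le_card_mul_sum_sq (s := supp x) (f := x)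
  rwa [sum_supp, hx.2, one_pow, sum_sq_supp] at h

lemma supp_smul_indic_subset (c : ℝ) (S : Finset (Fin n)) : supp (c • indic S) ⊆ S := by
  intro k hk
  by_contra hkS
  simp [indic, hkS] at hk

lemma inv_card_smul_indic_mem_stdSimplex {S : Finset (Fin n)} (hS : S.Nonempty) :
    (S.card : ℝ)⁻¹ • indic S ∈ stdSimplex ℝ (Fin n) := by
  refine ⟨fun k => ?_, ?_⟩
  · simp only [indic, Pi.smul_apply, smul_eq_mul]
    split_ifs <;> positivity
  simp only [Pi.smul_apply, smul_eq_mul, ← Finset.mul_sum, indic, Finset.sum_ite_mem,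
    Finset.univ_inter, Finset.sum_const, nsmul_eq_mul, mul_one]
  exact inv_mul_cancel₀ (by exact_mod_cast hS.card_pos.ne')

lemma add_smul_single_sub_single_mem_stdSimplex {x : Fin n → ℝ}
    (hx : x ∈ stdSimplex ℝ (Fin n)) {i j : Fin n} (hij : i ≠ j) :
    x + x j • (Pi.single i 1 - Pi.single j 1) ∈ stdSimplex ℝ (Fin n) := by
  refine ⟨fun k => ?_, ?_⟩
  · rcases eq_or_ne k j with rfl | hkj
    · simp [hij]
    · rcases eq_or_ne k i with rfl | hki
      · simpa [hkj] using add_nonneg (hx.1 k) (hx.1 j)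
      · simpa [hkj, hki] using hx.1 k
  · simp [Finset.sum_add_distrib, ← Finset.mul_sum, hx.2]

lemma supp_add_smul_single_sub_single_subset {x : Fin n → ℝ} {i j : Fin n} (hij : i ≠ j)
    (hi : x i ≠ 0) :
    supp (x + x j • (Pi.single i 1 - Pi.single j 1)) ⊆ (supp x).erase j := by
  intro k hk
  rcases eq_or_ne k j with rfl | hkj
  · simp [hij] at hk
  · rcases eq_or_ne k i with rfl | hki
    · simp [hkj, hi]
    · simp_all

section LowerBound

variable (G : SimpleGraph (Fin n))

lemma fG_eq_sum_sq_of_isStable_supp {x : Fin n → ℝ} (hx : IsStable G (supp x)) :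
    fG G x = ∑ k, x k ^ 2 := by
  rw [fG_eq_sum_sq_add, add_eq_left]
  simp only [dotProduct, mulVec, SimpleGraph.adjMatrix_apply, Finset.mul_sum]
  refine Finset.sum_eq_zero fun k _ => Finset.sum_eq_zero fun l _ => ?_
  by_cases hk : x k = 0
  · simp [hk]
  by_cases hl : x l = 0
  · simp [hl]
  simp [hx k (mem_supp.2 hk) l (mem_supp.2 hl)]

lemma fG_smul_indic {S : Finset (Fin n)} (hS : IsStable G S) (c : ℝ) :
    fG G (c • indic S) = c ^ 2 * S.card := by
  rw [fG_eq_sum_sq_of_isStable_supp G (hS.mono (supp_smul_indic_subset c S))]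
  simp [indic, Finset.sum_ite_mem, mul_comm]

lemma exists_isStable_supp_fG_le {x : Fin n → ℝ} (hx : x ∈ stdSimplex ℝ (Fin n)) :
    ∃ y ∈ stdSimplex ℝ (Fin n), IsStable G (supp y) ∧ fG G y ≤ fG G x := by
  induction hm : (supp x).card using Nat.strong_induction_on generalizing x with
  | _ m ih =>
  by_cases hst : IsStable G (supp x)
  · exact ⟨x, hx, hst, le_rfl⟩
  obtain ⟨i, hi, j, hj, hij⟩ : ∃ i ∈ supp x, ∃ j ∈ supp x, G.Adj i j := by
    simpa [IsStable] using hst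
  -- Moving the mass of `b` onto `a` shrinks the support; since `fG` is affine along
  -- `e_a - e_b`, one of the two orientations of the edge does not increase `fG`.
  have shift : ∀ {a b}, G.Adj a b → a ∈ supp x → b ∈ supp x →
      fG G (x + x b • (Pi.single a 1 - Pi.single b 1)) ≤ fG G x →
      ∃ y ∈ stdSimplex ℝ (Fin n), IsStable G (supp y) ∧ fG G y ≤ fG G x := by
    intro a b hab ha hb hle
    have hlt : (supp (x + x b • (Pi.single a 1 - Pi.single b 1))).card < m :=
      hm ▸ (Finset.card_le_card (supp_add_smul_single_sub_single_subset hab.ne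
        (mem_supp.1 ha))).trans_lt (Finset.card_erase_lt_of_mem hb)
    obtain ⟨y, hy, hyst, hyle⟩ :=
      ih _ hlt (add_smul_single_sub_single_mem_stdSimplex hx hab.ne) rfl
    exact ⟨y, hy, hyst, hyle.trans hle⟩
  obtain ⟨c, hc⟩ := exists_fG_add_smul_single_sub_single G hij x
  rcases le_total c 0 with hc0 | hc0
  · exact shift hij hi hj (by rw [hc]; nlinarith [hx.1 j])
  · refine shift hij.symm hj hi ?_
    rw [← neg_sub, smul_neg, ← neg_smul, hc]
    nlinarith [hx.1 i]

lemma one_le_alpha_mul_fG {x : Fin n → ℝ} (hx : x ∈ stdSimplex ℝ (Fin n)) :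
    1 ≤ (alpha G : ℝ) * fG G x := by
  obtain ⟨y, hy, hyst, hyle⟩ := exists_isStable_supp_fG_le G hx
  have hcard : ((supp y).card : ℝ) ≤ alpha G := by exact_mod_cast hyst.card_le_alpha
  calc 1 ≤ ((supp y).card : ℝ) * ∑ k, y k ^ 2 := one_le_card_supp_mul_sum_sq hy
    _ ≤ alpha G * fG G y := by
      rw [fG_eq_sum_sq_of_isStable_supp G hyst]
      gcongr
    _ ≤ alpha G * fG G x := by gcongr

end LowerBound

section Minimizers

variable {G : SimpleGraph (Fin n)}

lemma inv_alpha_smul_indic_mem_stdSimplex (hn : 0 < n) {S : Finset (Fin n)}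
    (hcard : S.card = alpha G) : (alpha G : ℝ)⁻¹ • indic S ∈ stdSimplex ℝ (Fin n) :=
  hcard ▸ inv_card_smul_indic_mem_stdSimplex (Finset.card_pos.1 (hcard ▸ alpha_pos hn G))

lemma fG_inv_alpha_smul_indic {S : Finset (Fin n)} (hS : IsStable G S)
    (hcard : S.card = alpha G) : fG G ((alpha G : ℝ)⁻¹ • indic S) = (alpha G : ℝ)⁻¹ := by
  rw [fG_smul_indic G hS, hcard, sq]
  simpa using mul_self_mul_inv ((alpha G : ℝ)⁻¹)

lemma mem_globMin_fG_iff (hn : 0 < n) {x : Fin n → ℝ} :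
    x ∈ globMin (fG G) ↔ x ∈ stdSimplex ℝ (Fin n) ∧ fG G x = (alpha G : ℝ)⁻¹ := by
  have hle : ∀ y ∈ stdSimplex ℝ (Fin n), (alpha G : ℝ)⁻¹ ≤ fG G y := fun y hy =>
    (inv_le_iff_one_le_mul₀' (by exact_mod_cast alpha_pos hn G)).2 (one_le_alpha_mul_fG G hy)
  obtain ⟨S, hS, hcard⟩ := exists_isStable_card_eq_alpha G
  constructor
  · rintro ⟨hx, hmin⟩
    refine ⟨hx, le_antisymm ?_ (hle x hx)⟩
    simpa [fG_inv_alpha_smul_indic hS hcard] using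
      hmin _ (inv_alpha_smul_indic_mem_stdSimplex hn hcard)
  · rintro ⟨hx, hval⟩
    exact ⟨hx, fun y hy => hval ▸ hle y hy⟩

lemma inv_alpha_smul_indic_mem_globMin (hn : 0 < n) {S : Finset (Fin n)} (hS : IsStable G S)
    (hcard : S.card = alpha G) : (alpha G : ℝ)⁻¹ • indic S ∈ globMin (fG G) :=
  (mem_globMin_fG_iff hn).2
    ⟨inv_alpha_smul_indic_mem_stdSimplex hn hcard, fG_inv_alpha_smul_indic hS hcard⟩

end Minimizers

lemma fG_deleteEdges (G : SimpleGraph (Fin n)) {i j : Fin n} (h : G.Adj i j) (x : Fin n → ℝ) :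
    fG (G.deleteEdges {s(i, j)}) x = fG G x - 2 * (x i * x j) := by
  rw [fG_eq_sum_sq_add, fG_eq_sum_sq_add]
  have hpt : ∀ k l, (if G.Adj k l ∧ ¬ s(k, l) = s(i, j) then (1 : ℝ) else 0) =
      (if G.Adj k l then 1 else 0) -
        ((if k = i ∧ l = j then 1 else 0) + if k = j ∧ l = i then 1 else 0) := by
    intro k l
    by_cases hkl : s(k, l) = s(i, j)
    · have hadj : G.Adj k l := by rwa [← G.mem_edgeSet, hkl]
      rcases Sym2.eq_iff.1 hkl with ⟨rfl, rfl⟩ | ⟨rfl, rfl⟩ <;> simp [hkl, hadj, h.ne, h.ne']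
    · rw [Sym2.eq_iff, not_or] at hkl
      simp [hkl.1, hkl.2]
  simp only [dotProduct, mulVec, SimpleGraph.adjMatrix_apply, Finset.mul_sum,
    SimpleGraph.deleteEdges_adj, Set.mem_singleton_iff, hpt, sub_mul, add_mul, mul_sub, mul_add,
    Finset.sum_sub_distrib, Finset.sum_add_distrib, ite_and, ite_mul, mul_ite, one_mul, zero_mul,
    mul_zero, Finset.sum_ite_irrel, Finset.sum_ite_eq', Finset.mem_univ, if_true,
    Finset.sum_const_zero]
  ring

lemma Finset.card_eq_and_eq_inv_of_sum_eq_one_of_sum_sq_eq_inv {ι : Type*} (S : Finset ι)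
    (x : ι → ℝ) {a : ℝ} (ha : 0 < a) (hsum : ∑ k ∈ S, x k = 1)
    (hsq : ∑ k ∈ S, x k ^ 2 = a⁻¹) (hcard : (S.card : ℝ) ≤ a) :
    (S.card : ℝ) = a ∧ ∀ k ∈ S, x k = a⁻¹ := by
  have hvar : ∑ k ∈ S, (x k - a⁻¹) ^ 2 = (S.card - a) / a ^ 2 := by
    simp only [sub_sq, Finset.sum_add_distrib, Finset.sum_sub_distrib, ← Finset.sum_mul,
      ← Finset.mul_sum, hsum, hsq, Finset.sum_const, nsmul_eq_mul]
    field_simp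
    ring
  have hzero : ∑ k ∈ S, (x k - a⁻¹) ^ 2 = 0 :=
    le_antisymm (hvar ▸ div_nonpos_of_nonpos_of_nonneg (by linarith) (by positivity))
      (Finset.sum_nonneg fun k _ => sq_nonneg _)
  refine ⟨?_, fun k hk => ?_⟩
  · rw [hzero, eq_comm, div_eq_zero_iff] at hvar
    rcases hvar with h | h
    · linarith
    · exact absurd h (by positivity)
  · have := (Finset.sum_eq_zero_iff_of_nonneg fun k _ => sq_nonneg (x k - a⁻¹)).1 hzero k hk
    linarith [pow_eq_zero_iff two_ne_zero |>.1 this]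

section NoCriticalEdge

variable {G : SimpleGraph (Fin n)}

lemma isStable_supp_of_mem_globMin (hn : 0 < n)
    (hcrit : ∀ i j, G.Adj i j → alpha (G.deleteEdges {s(i, j)}) = alpha G)
    {x : Fin n → ℝ} (hx : x ∈ globMin (fG G)) : IsStable G (supp x) := by
  obtain ⟨hxΔ, hval⟩ := (mem_globMin_fG_iff hn).1 hx
  intro i hi j hj hij
  have hpos : 0 < (alpha G : ℝ) * (x i * x j) :=
    mul_pos (by exact_mod_cast alpha_pos hn G)
      (mul_pos ((hxΔ.1 i).lt_of_ne' (mem_supp.1 hi)) ((hxΔ.1 j).lt_of_ne' (mem_supp.1 hj)))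
  have h := one_le_alpha_mul_fG (G.deleteEdges {s(i, j)}) hxΔ
  rw [hcrit i j hij, fG_deleteEdges G hij, hval, mul_sub,
    mul_inv_cancel₀ (by exact_mod_cast (alpha_pos hn G).ne')] at h
  linarith

lemma eq_inv_alpha_smul_indic_supp (hn : 0 < n) {x : Fin n → ℝ} (hx : x ∈ globMin (fG G))
    (hst : IsStable G (supp x)) :
    (supp x).card = alpha G ∧ x = (alpha G : ℝ)⁻¹ • indic (supp x) := by
  obtain ⟨hxΔ, hval⟩ := (mem_globMin_fG_iff hn).1 hx
  obtain ⟨hcard, hconst⟩ := Finset.card_eq_and_eq_inv_of_sum_eq_one_of_sum_sq_eq_inv (supp x) x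
    (a := alpha G) (by exact_mod_cast alpha_pos hn G) ((sum_supp x).trans hxΔ.2)
    (by rw [sum_sq_supp, ← fG_eq_sum_sq_of_isStable_supp G hst, hval])
    (by exact_mod_cast hst.card_le_alpha)
  refine ⟨by exact_mod_cast hcard, funext fun k => ?_⟩
  by_cases hk : k ∈ supp x
  · simp [indic, hk, hconst k hk]
  · simpa [indic, hk] using mem_supp.not.1 hk

lemma globMin_fG_eq (hn : 0 < n)
    (hcrit : ∀ i j, G.Adj i j → alpha (G.deleteEdges {s(i, j)}) = alpha G) :
    globMin (fG G) = {x | ∃ S : Finset (Fin n), IsStable G S ∧ S.card = alpha G ∧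
      x = (alpha G : ℝ)⁻¹ • indic S} := by
  ext x
  constructor
  · intro hx
    have hst := isStable_supp_of_mem_globMin hn hcrit hx
    exact ⟨supp x, hst, eq_inv_alpha_smul_indic_supp hn hx hst⟩
  · rintro ⟨S, hS, hcard, rfl⟩
    exact inv_alpha_smul_indic_mem_globMin hn hS hcard

end NoCriticalEdge

lemma infinite_segment {𝕜 E : Type*} [Field 𝕜] [LinearOrder 𝕜] [IsStrictOrderedRing 𝕜]
    [AddCommGroup E] [Module 𝕜 E] {u v : E} (h : u ≠ v) : (segment 𝕜 u v).Infinite := by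
  rw [segment_eq_image_lineMap]
  exact (Set.Icc_infinite zero_lt_one).image (AffineMap.lineMap_injective 𝕜 h).injOn

lemma indic_erase {T : Finset (Fin n)} {i : Fin n} (hi : i ∈ T) :
    indic (T.erase i) = indic T - Pi.single i 1 := by
  funext k
  rcases eq_or_ne k i with rfl | hki
  · simp [indic, hi]
  · simp [indic, hki]

section CriticalEdge

variable {G : SimpleGraph (Fin n)}

lemma exists_isStable_erase_of_alpha_deleteEdges_ne {i j : Fin n}
    (hne : alpha (G.deleteEdges {s(i, j)}) ≠ alpha G) :
    ∃ T : Finset (Fin n), i ∈ T ∧ j ∈ T ∧ IsStable G (T.erase i) ∧ IsStable G (T.erase j) ∧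
      T.card = alpha G + 1 := by
  have hlt : alpha G < alpha (G.deleteEdges {s(i, j)}) :=
    (alpha_le_alpha_deleteEdges G _).lt_of_ne' hne
  obtain ⟨T₀, hT₀, hcard₀⟩ := exists_isStable_card_eq_alpha (G.deleteEdges {s(i, j)})
  obtain ⟨T, hTT₀, hcard⟩ := Finset.exists_subset_card_eq (show alpha G + 1 ≤ T₀.card by omega)
  have hT := hT₀.mono hTT₀
  have hTi : IsStable G (T.erase i) := hT.erase_of_deleteEdges
  have hTj : IsStable G (T.erase j) := by
    rw [Sym2.eq_swap] at hT
    exact hT.erase_of_deleteEdges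
  have mem : ∀ {a}, IsStable G (T.erase a) → a ∈ T := fun {a} h => by
    by_contra ha
    have := (Finset.erase_eq_of_notMem ha ▸ h).card_le_alpha
    omega
  exact ⟨T, mem hTi, mem hTj, hTi, hTj, hcard⟩

lemma segment_subset_globMin_fG {u v : Fin n → ℝ} (hu : u ∈ globMin (fG G))
    (hv : v ∈ globMin (fG G)) {i j : Fin n} (hij : G.Adj i j) {s : ℝ}
    (huv : v = u + s • (Pi.single i 1 - Pi.single j 1)) : segment ℝ u v ⊆ globMin (fG G) := by
  obtain ⟨c, hc⟩ := exists_fG_add_smul_single_sub_single G hij u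
  have hsc : s * c = 0 := by
    have := hc s
    rw [← huv, le_antisymm (hv.2 u hu.1) (hu.2 v hv.1)] at this
    linarith
  intro z hz
  refine ⟨(convex_stdSimplex ℝ (Fin n)).segment_subset hu.1 hv.1 hz, fun y hy => ?_⟩
  rw [segment_eq_image'] at hz
  obtain ⟨θ, -, rfl⟩ := hz
  change fG G (u + θ • (v - u)) ≤ fG G y
  rw [huv, add_sub_cancel_left, smul_smul, hc, mul_assoc, hsc, mul_zero, add_zero]
  exact hu.2 y hy

lemma globMin_fG_infinite (hn : 0 < n) {i j : Fin n} (hij : G.Adj i j)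
    (hne : alpha (G.deleteEdges {s(i, j)}) ≠ alpha G) : (globMin (fG G)).Infinite := by
  obtain ⟨T, hi, hj, hTi, hTj, hcard⟩ := exists_isStable_erase_of_alpha_deleteEdges_ne hne
  have hu := inv_alpha_smul_indic_mem_globMin hn hTi (by rw [card_erase_of_mem hi, hcard]; rfl)
  have hv := inv_alpha_smul_indic_mem_globMin hn hTj (by rw [card_erase_of_mem hj, hcard]; rfl)
  have huv : (alpha G : ℝ)⁻¹ • indic (T.erase j) =
      (alpha G : ℝ)⁻¹ • indic (T.erase i) + (alpha G : ℝ)⁻¹ • (Pi.single i 1 - Pi.single j 1) := by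
    rw [indic_erase hi, indic_erase hj]
    module
  have hne : (alpha G : ℝ)⁻¹ • indic (T.erase i) ≠ (alpha G : ℝ)⁻¹ • indic (T.erase j) := by
    intro h
    have := congrFun (h.trans huv) i
    simp [hij.ne, (alpha_pos hn G).ne'] at this
  exact (infinite_segment hne).mono (segment_subset_globMin_fG hu hv hij huv)

end CriticalEdge

theorem stmt_7 (n : ℕ) (hn : 0 < n) (G : SimpleGraph (Fin n)) :
    ((∀ i j, G.Adj i j → alpha (G.deleteEdges {s(i, j)}) = alpha G) ↔
      (globMin (fG G)).Finite) ∧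
    ((∀ i j, G.Adj i j → alpha (G.deleteEdges {s(i, j)}) = alpha G) →
      globMin (fG G) =
        {x | ∃ S : Finset (Fin n), IsStable G S ∧ S.card = alpha G ∧
          x = (alpha G : ℝ)⁻¹ • indic S}) := by
  refine ⟨⟨fun hcrit => ?_, fun hfin i j hij => ?_⟩, globMin_fG_eq hn⟩
  · rw [globMin_fG_eq hn hcrit]
    refine (Set.finite_range fun S : Finset (Fin n) => (alpha G : ℝ)⁻¹ • indic S).subset ?_
    rintro x ⟨S, -, -, rfl⟩
    exact ⟨S, rfl⟩
  · by_contra hne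
    exact globMin_fG_infinite hn hij hne hfin
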